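/- arXiv:2502.16225 — 2 statements merged into one kernel-verified Lean document; each statement's English description precedes it below -/
import Mathlib

section
/- Let N be a nonnegative integer-valued random variable with E[N] = 1 and variance σ^2 = E[N^2] - 1 < ∞. With H(s) = (s - 1 + E[(1-s)^N])/s for s ∈ (0,1], one has lim_{r→0+} H(r)/r = σ^2/2. -/
open MeasureTheory Filter Topology Set

lemma nn (n : ℕ) : (0:ℝ) ≤ (n:ℝ) * ((n:ℝ) - 1) := by
  cases n with
  | zero => simp
  | succ m =>
    have hm : (0:ℝ) ≤ (m:ℝ) := Nat.cast_nonneg m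
    push_cast; nlinarith

lemma nnn (n : ℕ) : (0:ℝ) ≤ (n:ℝ) * ((n:ℝ) - 1) * ((n:ℝ) - 2) := by
  rcases n with _ | _ | m
  · simp
  · norm_num
  · have hm : (0:ℝ) ≤ (m:ℝ) := Nat.cast_nonneg m
    push_cast
    have h : ((m:ℝ)+1+1)*((m:ℝ)+1+1-1)*((m:ℝ)+1+1-2) = ((m:ℝ)+2)*((m:ℝ)+1)*(m:ℝ) := by ring
    rw [h]; positivity

lemma ub (n : ℕ) {r : ℝ} (h0 : 0 ≤ r) (h1 : r ≤ 1) :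
    (1 - r)^n ≤ 1 - n*r + n*(n-1)/2*r^2 := by
  induction n with
  | zero => simp
  | succ n ih =>
    have h2 : (0:ℝ) ≤ 1 - r := by linarith
    have h4 : (1-r)*(1-r)^n ≤ (1-r)*(1 - n*r + n*(n-1)/2*r^2) :=
      mul_le_mul_of_nonneg_left ih h2
    have h5 : (0:ℝ) ≤ (n:ℝ)*((n:ℝ)-1) := nn n
    have hp : (1-r)^(n+1) = (1-r)^n*(1-r) := pow_succ _ _
    push_cast
    nlinarith [mul_nonneg (mul_nonneg h5 h0) (mul_nonneg h0 h0)]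

lemma lb (n : ℕ) {r : ℝ} (h0 : 0 ≤ r) (h1 : r ≤ 1) :
    1 - n*r + n*(n-1)/2*r^2 - n*(n-1)*(n-2)/6*r^3 ≤ (1 - r)^n := by
  induction n with
  | zero => simp
  | succ n ih =>
    have h2 : (0:ℝ) ≤ 1 - r := by linarith
    have h4 : (1-r)*(1 - n*r + n*(n-1)/2*r^2 - n*(n-1)*(n-2)/6*r^3) ≤ (1-r)*(1-r)^n :=
      mul_le_mul_of_nonneg_left ih h2
    have h5 : (0:ℝ) ≤ (n:ℝ)*((n:ℝ)-1)*((n:ℝ)-2) := nnn n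
    have hp : (1-r)^(n+1) = (1-r)^n*(1-r) := pow_succ _ _
    push_cast
    nlinarith [mul_nonneg (mul_nonneg h5 h0) (mul_nonneg (mul_nonneg h0 h0) h0)]

lemma ptlim (n : ℕ) :
    Tendsto (fun r : ℝ => ((1-r)^n - 1 + n*r)/r^2) (𝓝[>] 0)
      (𝓝 ((n:ℝ)*((n:ℝ)-1)/2)) := by
  apply tendsto_of_tendsto_of_tendsto_of_le_of_le'
    (g := fun r : ℝ => (n:ℝ)*((n:ℝ)-1)/2 - (n:ℝ)*((n:ℝ)-1)*((n:ℝ)-2)/6*r)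
    (h := fun _ : ℝ => (n:ℝ)*((n:ℝ)-1)/2)
  · have hc : Continuous (fun r : ℝ => (n:ℝ)*((n:ℝ)-1)/2 - (n:ℝ)*((n:ℝ)-1)*((n:ℝ)-2)/6*r) := by
      continuity
    have := (hc.tendsto 0).mono_left (nhdsWithin_le_nhds (s := Ioi (0:ℝ)))
    simpa using this
  · exact tendsto_const_nhds
  · filter_upwards [Ioc_mem_nhdsGT_of_mem (by norm_num : (0:ℝ) ∈ Ico 0 1)] with r hr
    have h0 : 0 < r := hr.1
    have h1 : r ≤ 1 := hr.2
    have hl := lb n h0.le h1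
    rw [le_div_iff₀ (by positivity : (0:ℝ) < r^2)]
    nlinarith
  · filter_upwards [Ioc_mem_nhdsGT_of_mem (by norm_num : (0:ℝ) ∈ Ico 0 1)] with r hr
    have h0 : 0 < r := hr.1
    have h1 : r ≤ 1 := hr.2
    have hu := ub n h0.le h1
    rw [div_le_iff₀ (by positivity : (0:ℝ) < r^2)]
    nlinarith

theorem stmt3 {Ω : Type*} [MeasureSpace Ω] (μ : Measure Ω) [IsProbabilityMeasure μ]
    (N : Ω → ℕ) (hNmeas : Measurable N)
    (hmean : ∫ ω, (N ω : ℝ) ∂μ = 1)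
    (hsq : Integrable (fun ω => (N ω : ℝ)^2) μ)
    (H : ℝ → ℝ)
    (hH : ∀ s : ℝ, s ≠ 0 → H s = (s - 1 + ∫ ω, (1 - s) ^ (N ω) ∂μ) / s) :
    Tendsto (fun r => H r / r) (𝓝[>] 0)
      (𝓝 (((∫ ω, (N ω : ℝ)^2 ∂μ) - 1) / 2)) := by
  have hNR : Measurable fun ω => (N ω : ℝ) := by fun_prop
  have hNint : Integrable (fun ω => (N ω : ℝ)) μ := by
    refine (hsq.add (integrable_const 1)).mono' hNR.aestronglyMeasurable ?_
    filter_upwards with ω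
    have h0 : (0:ℝ) ≤ (N ω : ℝ) := Nat.cast_nonneg _
    rw [Real.norm_eq_abs, abs_of_nonneg h0]
    simp only [Pi.add_apply]
    nlinarith
  set F : ℝ → Ω → ℝ := fun r ω => ((1-r)^(N ω) - 1 + (N ω : ℝ)*r)/r^2 with hF
  have key : Tendsto (fun r => ∫ ω, F r ω ∂μ) (𝓝[>] (0:ℝ))
      (𝓝 (∫ ω, (N ω : ℝ)*((N ω : ℝ)-1)/2 ∂μ)) := by
    apply tendsto_integral_filter_of_dominated_convergence (bound := fun ω => (N ω : ℝ)^2)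
    · filter_upwards with r
      apply Measurable.aestronglyMeasurable
      fun_prop
    · filter_upwards [Ioc_mem_nhdsGT_of_mem (by norm_num : (0:ℝ) ∈ Ico 0 1)] with r hr
      filter_upwards with ω
      have h0 : 0 < r := hr.1
      have h1 : r ≤ 1 := hr.2
      have hl := lb (N ω) h0.le h1
      have hu := ub (N ω) h0.le h1
      have hber : 1 - (N ω : ℝ)*r ≤ (1-r)^(N ω) := by
        have := one_add_mul_le_pow (a := -r) (by linarith) (N ω)
        calc 1 - (N ω : ℝ)*r = 1 + (N ω : ℕ)*(-r) := by push_cast; ring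
        _ ≤ (1 + -r)^(N ω) := this
        _ = (1-r)^(N ω) := by ring_nf
      have hFnn : 0 ≤ F r ω := by
        apply div_nonneg _ (by positivity)
        linarith
      rw [Real.norm_eq_abs, abs_of_nonneg hFnn, hF]
      simp only
      rw [div_le_iff₀ (by positivity : (0:ℝ) < r^2)]
      have hnn := nn (N ω)
      nlinarith [mul_nonneg (mul_nonneg hnn h0.le) (mul_nonneg h0.le h0.le),
        sq_nonneg ((N ω : ℝ) - 1), sq_nonneg r]
    · exact hsq
    · filter_upwards with ω
      simpa using ptlim (N ω)
  have heq : (fun r => H r / r) =ᶠ[𝓝[>] (0:ℝ)] fun r => ∫ ω, F r ω ∂μ := by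
    filter_upwards [Ioc_mem_nhdsGT_of_mem (by norm_num : (0:ℝ) ∈ Ico 0 1)] with r hr
    have h0 : 0 < r := hr.1
    have h1 : r ≤ 1 := hr.2
    have hr0 : r ≠ 0 := ne_of_gt h0
    have hb : Integrable (fun ω => (1-r : ℝ)^(N ω)) μ := by
      refine (integrable_const (1:ℝ)).mono' (Measurable.aestronglyMeasurable (by fun_prop)) ?_
      filter_upwards with ω
      rw [Real.norm_eq_abs, abs_pow]
      calc |1-r|^(N ω) ≤ 1^(N ω) := by
            apply pow_le_pow_left₀ (abs_nonneg _)
            rw [abs_le]; constructor <;> linarith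
      _ = 1 := one_pow _
    have hI : ∫ ω, F r ω ∂μ = ((∫ ω, (1-r)^(N ω) ∂μ) - 1 + 1*r)/r^2 := by
      rw [hF]
      simp only
      rw [integral_div]
      congr 1
      have hfg : Integrable (fun ω => (1-r : ℝ)^(N ω) - 1) μ := hb.sub (integrable_const 1)
      have hNr : Integrable (fun ω => (N ω : ℝ) * r) μ := hNint.mul_const r
      rw [integral_add hfg hNr, integral_sub hb (integrable_const 1), integral_mul_const, hmean]
      simp
    rw [hI, hH r hr0]
    field_simp
    ring
  have hval : ∫ ω, (N ω : ℝ)*((N ω : ℝ)-1)/2 ∂μ = ((∫ ω, (N ω : ℝ)^2 ∂μ) - 1)/2 := by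
    have hrw : (fun ω => (N ω : ℝ)*((N ω : ℝ)-1)/2) = fun ω => ((N ω : ℝ)^2 - (N ω : ℝ))/2 := by
      funext ω; ring
    rw [hrw, integral_div, integral_sub hsq hNint, hmean]
  rw [← hval]
  exact key.congr' heq.symm
end

section
/- Let S be an ℝ^d-valued random vector, r > 0, and M > r. Then ∫_{|x| > M} P(|S + x| < r) dx ≤ v_d(r) · P(|S| ≥ M - r), where v_d(r) is the volume of the d-dimensional ball of radius r. -/
open MeasureTheory

theorem stmt10 {Ω : Type*} [MeasurableSpace Ω] (μ : Measure Ω) [IsProbabilityMeasure μ]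
    (d : ℕ) (S : Ω → EuclideanSpace ℝ (Fin d)) (hS : Measurable S)
    (r M : ℝ) (hr : 0 < r) (hM : r < M) :
    ∫ x in {x : EuclideanSpace ℝ (Fin d) | M < ‖x‖},
        (μ {ω | ‖S ω + x‖ < r}).toReal ∂(volume : Measure (EuclideanSpace ℝ (Fin d)))
      ≤ (volume (Metric.ball (0 : EuclideanSpace ℝ (Fin d)) r)).toReal
        * (μ {ω | M - r ≤ ‖S ω‖}).toReal := by
  set A : Set (EuclideanSpace ℝ (Fin d)) := {x | M < ‖x‖} with hA
  have hAm : MeasurableSet A := measurableSet_lt measurable_const measurable_norm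
  set ν : Measure (EuclideanSpace ℝ (Fin d)) := volume.restrict A with hν
  set s : Set (EuclideanSpace ℝ (Fin d) × Ω) := {p | ‖S p.2 + p.1‖ < r} with hs
  have hsm : MeasurableSet s := by
    have hm : Measurable fun p : EuclideanSpace ℝ (Fin d) × Ω => ‖S p.2 + p.1‖ := by
      fun_prop
    exact measurableSet_lt hm measurable_const
  have hmeas : Measurable fun x : EuclideanSpace ℝ (Fin d) => μ {ω | ‖S ω + x‖ < r} :=
    measurable_measure_prodMk_left hsm
  have hfin : volume (Metric.ball (0 : EuclideanSpace ℝ (Fin d)) r) < ⊤ := measure_ball_lt_top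
  have hmset : MeasurableSet {ω | M - r ≤ ‖S ω‖} := measurableSet_le measurable_const hS.norm
  have key : ∫⁻ x, μ {ω | ‖S ω + x‖ < r} ∂ν
      ≤ volume (Metric.ball (0 : EuclideanSpace ℝ (Fin d)) r) * μ {ω | M - r ≤ ‖S ω‖} := by
    have h1 : ∫⁻ x, μ {ω | ‖S ω + x‖ < r} ∂ν = (ν.prod μ) s := by
      rw [Measure.prod_apply hsm]; rfl
    have h2 : (ν.prod μ) s = ∫⁻ ω, ν ((fun x => (x, ω)) ⁻¹' s) ∂μ :=
      Measure.prod_apply_symm hsm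
    rw [h1, h2]
    have hb : ∀ ω, ν ((fun x => (x, ω)) ⁻¹' s)
        ≤ {ω | M - r ≤ ‖S ω‖}.indicator
            (fun _ => volume (Metric.ball (0 : EuclideanSpace ℝ (Fin d)) r)) ω := by
      intro ω
      by_cases hω : ω ∈ {ω | M - r ≤ ‖S ω‖}
      · rw [Set.indicator_of_mem hω]
        calc ν ((fun x => (x, ω)) ⁻¹' s) ≤ volume ((fun x => (x, ω)) ⁻¹' s) :=
              Measure.restrict_le_self _
          _ ≤ volume (Metric.ball (-(S ω)) r) := by
              apply measure_mono
              intro x hx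
              simp only [Set.mem_preimage, hs, Set.mem_setOf_eq] at hx
              rw [Metric.mem_ball, dist_eq_norm]
              simpa [sub_neg_eq_add, add_comm] using hx
          _ = volume (Metric.ball (0 : EuclideanSpace ℝ (Fin d)) r) :=
              Measure.addHaar_ball_center _ _ _
      · rw [Set.indicator_of_notMem hω]
        have he : ((fun x => (x, ω)) ⁻¹' s) ∩ A = ∅ := by
          ext x
          simp only [Set.mem_inter_iff, Set.mem_preimage, hs, hA, Set.mem_setOf_eq,
            Set.mem_empty_iff_false, iff_false, not_and]
          intro hx hxA
          simp only [Set.mem_setOf_eq, not_le] at hω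
          have h1 : ‖x‖ ≤ ‖S ω + x‖ + ‖S ω‖ := by
            have := norm_sub_le (S ω + x) (S ω)
            simpa using this
          linarith
        rw [hν, Measure.restrict_apply' hAm, he, measure_empty]
    calc ∫⁻ ω, ν ((fun x => (x, ω)) ⁻¹' s) ∂μ
        ≤ ∫⁻ ω, {ω | M - r ≤ ‖S ω‖}.indicator
            (fun _ => volume (Metric.ball (0 : EuclideanSpace ℝ (Fin d)) r)) ω ∂μ :=
          lintegral_mono hb
      _ = volume (Metric.ball (0 : EuclideanSpace ℝ (Fin d)) r) * μ {ω | M - r ≤ ‖S ω‖} := by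
          rw [lintegral_indicator_const hmset]
  have lhs_eq : ∫ x in A, (μ {ω | ‖S ω + x‖ < r}).toReal ∂volume
      = (∫⁻ x, μ {ω | ‖S ω + x‖ < r} ∂ν).toReal :=
    integral_toReal hmeas.aemeasurable (ae_of_all _ fun x => measure_lt_top μ _)
  calc ∫ x in A, (μ {ω | ‖S ω + x‖ < r}).toReal ∂volume
      = (∫⁻ x, μ {ω | ‖S ω + x‖ < r} ∂ν).toReal := lhs_eq
    _ ≤ (volume (Metric.ball (0 : EuclideanSpace ℝ (Fin d)) r)
          * μ {ω | M - r ≤ ‖S ω‖}).toReal :=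
        ENNReal.toReal_mono (ENNReal.mul_ne_top hfin.ne (measure_ne_top μ _)) key
    _ = (volume (Metric.ball (0 : EuclideanSpace ℝ (Fin d)) r)).toReal
          * (μ {ω | M - r ≤ ‖S ω‖}).toReal := ENNReal.toReal_mul
end
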